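/- Under the hypotheses (A1)–(A2) and (P1)–(P9) of the new parity conditions for a single pair (F, G) of families of functions on (0,π) × ℝ indexed by a,b ∈ {r,θ,φ} (with T := F^r_r − F^θ_θ − F^φ_φ), the contraction Σ_{a,b ∈ {r,θ,φ}} F^a_b G^b_a is odd under the antipodal map, i.e. ( Σ_{a,b} F^a_b G^b_a ) ∘ σ = − Σ_{a,b} F^a_b G^b_a, where σ(θ,φ) = (π−θ, φ+π). -/

import Mathlib

/-- Index set `{r, θ, φ}` for the frame components on the asymptotic 2-sphere. -/
inductive SphIdx : Type
  | r : SphIdx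
  | th : SphIdx
  | ph : SphIdx
  deriving DecidableEq

instance instFintypeSphIdx : Fintype SphIdx :=
  ⟨{SphIdx.r, SphIdx.th, SphIdx.ph}, by intro x; cases x <;> simp⟩

/-- The antipodal map of the 2-sphere in spherical coordinates,
`σ(θ,φ) = (π − θ, φ + π)`. -/
noncomputable def antipode : ℝ × ℝ → ℝ × ℝ :=
  fun p => (Real.pi - p.1, p.2 + Real.pi)

/-- A function is even if `u ∘ σ = u`. -/
def IsEvenFn (u : ℝ × ℝ → ℝ) : Prop := ∀ p, u (antipode p) = u p

/-- A function is odd if `u ∘ σ = − u`. -/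
def IsOddFn (u : ℝ × ℝ → ℝ) : Prop := ∀ p, u (antipode p) = - u p

lemma sphidx_sum (f : SphIdx → ℝ) : ∑ a, f a = f .r + f .th + f .ph := by
  rw [show (Finset.univ : Finset SphIdx) = {.r, .th, .ph} from rfl]
  simp [Finset.sum_insert, Finset.mem_insert]
  ring

lemma sin_antipode (p : ℝ × ℝ) : Real.sin (antipode p).1 = Real.sin p.1 := by
  simp [antipode, Real.sin_pi_sub]

lemma half_key (s : ℝ) : s ^ 2 * (2 * s)⁻¹ = s / 2 := by
  rcases eq_or_ne s 0 with h | h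
  · simp [h]
  · field_simp

/-- Under the gauge conditions (A1)–(A2) and the new parity conditions (P1)–(P9) of the
paper, the contraction `Σ_{a,b} F^a_b G^b_a` is odd under the antipodal map. -/
theorem contraction_odd_new_parity
    (F G : SphIdx → SphIdx → ℝ × ℝ → ℝ)
    (T : ℝ × ℝ → ℝ)
    (hT : ∀ p, T p = F .r .r p - F .th .th p - F .ph .ph p)
    (hFsmooth : ∀ a b, ContDiffOn ℝ 1 (F a b) (Set.Ioo 0 Real.pi ×ˢ (Set.univ : Set ℝ)))
    (hGsmooth : ∀ a b, ContDiffOn ℝ 1 (G a b) (Set.Ioo 0 Real.pi ×ˢ (Set.univ : Set ℝ)))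
    (hFper : ∀ a b θ φ, F a b (θ, φ + 2 * Real.pi) = F a b (θ, φ))
    (hGper : ∀ a b θ φ, G a b (θ, φ + 2 * Real.pi) = G a b (θ, φ))
    (hA1 : ∀ p, F .r .th p = - F .th .r p ∧
      F .r .ph p = - (Real.sin p.1) ^ 2 * F .ph .r p)
    (hA2 : ∀ p, F .th .ph p = (Real.sin p.1) ^ 2 * F .ph .th p)
    (hP1 : IsEvenFn (F .th .r) ∧ IsEvenFn (F .th .ph) ∧ IsEvenFn (F .ph .th))
    (hP2 : IsOddFn (F .ph .r) ∧ IsOddFn (F .th .th) ∧ IsOddFn (F .ph .ph) ∧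
      IsOddFn (G .r .r))
    (hP3 : IsEvenFn T ∧ IsEvenFn (fun p => G .th .th p + G .r .r p) ∧
      IsEvenFn (fun p => G .ph .ph p + G .r .r p))
    (hP4 : IsOddFn (fun p =>
      G .th .r p + (2 * Real.sin p.1)⁻¹ * deriv (fun y => T (p.1, y)) p.2))
    (hP5 : IsOddFn (fun p =>
      G .r .th p + (2 * Real.sin p.1)⁻¹ * deriv (fun y => T (p.1, y)) p.2))
    (hP6 : IsEvenFn (fun p =>
      G .ph .r p - (2 * Real.sin p.1)⁻¹ * deriv (fun x => T (x, p.2)) p.1))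
    (hP7 : IsEvenFn (fun p =>
      G .r .ph p - (Real.sin p.1 / 2) * deriv (fun x => T (x, p.2)) p.1))
    (hP8 : IsOddFn (fun p => G .th .ph p + (Real.sin p.1 / 2) * T p))
    (hP9 : IsOddFn (fun p => G .ph .th p - (2 * Real.sin p.1)⁻¹ * T p)) :
    ∀ p : ℝ × ℝ, (∑ a : SphIdx, ∑ b : SphIdx, F a b (antipode p) * G b a (antipode p))
      = - ∑ a : SphIdx, ∑ b : SphIdx, F a b p * G b a p := by
  intro p
  obtain ⟨hFthr, hFthph, hFphth⟩ := hP1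
  obtain ⟨hFphr, hFthth, hFphph, hGrr⟩ := hP2
  obtain ⟨hTev, hGthth, hGphph⟩ := hP3
  -- abbreviations
  set q := antipode p with hq
  have hs : Real.sin q.1 = Real.sin p.1 := sin_antipode p
  set s := Real.sin p.1 with hsdef
  set A := deriv (fun y => T (p.1, y)) p.2 with hA
  set A' := deriv (fun y => T (q.1, y)) q.2 with hA'
  set D := deriv (fun x => T (x, p.2)) p.1 with hD
  set D' := deriv (fun x => T (x, q.2)) q.1 with hD'
  -- F components at q
  have eFthr : F .th .r q = F .th .r p := hFthr p
  have eFphth : F .ph .th q = F .ph .th p := hFphth p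
  have eFphr : F .ph .r q = - F .ph .r p := hFphr p
  have eFthth : F .th .th q = - F .th .th p := hFthth p
  have eFphph : F .ph .ph q = - F .ph .ph p := hFphph p
  have eT : T q = T p := hTev p
  have eFrr : F .r .r q = T p + F .th .th q + F .ph .ph q := by
    have := hT q; linarith [this, eT]
  have eFrth : F .r .th q = - F .th .r q := (hA1 q).1
  have eFrph : F .r .ph q = - s ^ 2 * F .ph .r q := by
    have := (hA1 q).2; rwa [hs] at this
  have eFthph : F .th .ph q = s ^ 2 * F .ph .th q := by
    have := hA2 q; rwa [hs] at this
  have eFrth' : F .r .th p = - F .th .r p := (hA1 p).1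
  have eFrph' : F .r .ph p = - s ^ 2 * F .ph .r p := (hA1 p).2
  have eFthph' : F .th .ph p = s ^ 2 * F .ph .th p := hA2 p
  have eFrr' : T p = F .r .r p - F .th .th p - F .ph .ph p := hT p
  -- G components at q
  have eGrr : G .r .r q = - G .r .r p := hGrr p
  have eGthth : G .th .th q + G .r .r q = G .th .th p + G .r .r p := hGthth p
  have eGphph : G .ph .ph q + G .r .r q = G .ph .ph p + G .r .r p := hGphph p
  have eGthr : G .th .r q + (2 * s)⁻¹ * A' = -(G .th .r p + (2 * s)⁻¹ * A) := by
    have := hP4 p; simp only at this; rw [hs] at this; exact this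
  have eGrth : G .r .th q + (2 * s)⁻¹ * A' = -(G .r .th p + (2 * s)⁻¹ * A) := by
    have := hP5 p; simp only at this; rw [hs] at this; exact this
  have eGphr : G .ph .r q - (2 * s)⁻¹ * D' = G .ph .r p - (2 * s)⁻¹ * D := by
    have := hP6 p; simp only at this; rw [hs] at this; exact this
  have eGrph : G .r .ph q - (s / 2) * D' = G .r .ph p - (s / 2) * D := by
    have := hP7 p; simp only at this; rw [hs] at this; exact this
  have eGthph : G .th .ph q + (s / 2) * T q = -(G .th .ph p + (s / 2) * T p) := by
    have := hP8 p; simp only at this; rw [hs] at this; exact this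
  have eGphth : G .ph .th q - (2 * s)⁻¹ * T q = -(G .ph .th p - (2 * s)⁻¹ * T p) := by
    have := hP9 p; simp only at this; rw [hs] at this; exact this
  have hkey : s ^ 2 * (2 * s)⁻¹ = s / 2 := half_key s
  -- expand sums
  simp only [sphidx_sum]
  -- turn everything into a linear-algebra problem
  have eGthr' : G .th .r q = -(G .th .r p + (2 * s)⁻¹ * A) - (2 * s)⁻¹ * A' := by linarith
  have eGrth' : G .r .th q = -(G .r .th p + (2 * s)⁻¹ * A) - (2 * s)⁻¹ * A' := by linarith
  have eGphr' : G .ph .r q = G .ph .r p - (2 * s)⁻¹ * D + (2 * s)⁻¹ * D' := by linarith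
  have eGrph' : G .r .ph q = G .r .ph p - (s / 2) * D + (s / 2) * D' := by linarith
  have eGthph' : G .th .ph q = -(G .th .ph p) - s * T p := by rw [eT] at eGthph; linarith
  have eGphth' : G .ph .th q = -(G .ph .th p) + 2 * ((2 * s)⁻¹ * T p) := by
    rw [eT] at eGphth; linarith
  have eGthth' : G .th .th q = G .th .th p + 2 * G .r .r p := by linarith
  have eGphph' : G .ph .ph q = G .ph .ph p + 2 * G .r .r p := by linarith
  rw [eFrr, eFrth, eFrph, eFthph, eFthr, eFphth, eFphr, eFthth, eFphph,
    eGrr, eGthr', eGrth', eGphr', eGrph', eGthph', eGphth', eGthth', eGphph',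
    eFrth', eFrph', eFthph', eFrr']
  have hkey2 : s ^ 2 * s⁻¹ = s := by
    rcases eq_or_ne s 0 with h | h
    · simp [h]
    · field_simp
  linear_combination (F .ph .r p * (D - D') + 2 * F .ph .th p * T p) * hkey +
    (F .ph .r p * (D' - D) +
      (F .r .r p - F .th .th p - F .ph .ph p - T p) * F .ph .th p) * hkey2
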